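/- Greedy search under denoising-based intervention recovers exactly one edge of an AND gate, namely the last one processed: let n ≥ 1 and define assignments x^{(0)}, …, x^{(n)} : Fin n → Bool by x^{(0)} = all-false and, for each step i = 1, …, n, letting y = Function.update x^{(i−1)} i true, set x^{(i)} = y if ⋀_j y j = ⋀_j x^{(i−1)} j (edge i is removed, keeping the clean activation true) and x^{(i)} = x^{(i−1)} otherwise (edge i is retained, reverting to the corrupted activation false). Then the set of retained edges is exactly the singleton {n}: x^{(n)} i = true for all i < n and x^{(n)} n = false. -/

import Mathlib

/-!
Along the greedy run the assignment is always a prefix of `true`s followed by `false`s. As long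
as the last coordinate is still `false`, restoring edge `k` leaves the AND gate at `false`, so the
edge is removed and the prefix grows by one. Only at the last edge does the restoration make every
input `true`; the output flips, and that edge alone is retained.
-/

open Function

def prefixTrue (n k : ℕ) : Fin n → Bool := fun j => decide (j.val < k)

namespace prefixTrue

@[simp]
lemma apply {n k : ℕ} (j : Fin n) : prefixTrue n k j = decide (j.val < k) := rfl

lemma zero (n : ℕ) : prefixTrue n 0 = fun _ => false := by
  funext j
  simp

lemma update_true {n k : ℕ} (hk : k < n) :
    update (prefixTrue n k) ⟨k, hk⟩ true = prefixTrue n (k + 1) := by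
  funext j
  rcases eq_or_ne j ⟨k, hk⟩ with rfl | hj
  · simp
  · have : j.val ≠ k := fun h => hj (Fin.ext h)
    simp only [update_of_ne hj, apply, decide_eq_decide]
    omega

lemma forall_eq_true_iff {n k : ℕ} : (∀ j, prefixTrue n k j = true) ↔ n ≤ k := by
  refine ⟨fun h => ?_, fun h j => by simp; omega⟩
  by_contra! hkn
  simpa using h ⟨k, hkn⟩

end prefixTrue

lemma greedy_step_prefixTrue {n k : ℕ} (hk : k < n) :
    (if decide (∀ j, update (prefixTrue n k) ⟨k, hk⟩ true j = true) =
          decide (∀ j, prefixTrue n k j = true)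
      then update (prefixTrue n k) ⟨k, hk⟩ true else prefixTrue n k) =
      prefixTrue n (if k + 1 < n then k + 1 else k) := by
  simp only [prefixTrue.update_true, prefixTrue.forall_eq_true_iff, decide_eq_decide]
  by_cases hlast : k + 1 < n
  · rw [if_pos (by omega), if_pos hlast]
  · rw [if_neg (by omega), if_neg hlast]

/-- Greedy denoising-based search on an AND gate with `n ≥ 1` senders,
processing edges in order, starts from the all-false (corrupted) assignment, tentatively
restores each edge to `true`, keeps the restoration if the AND output is unchanged (edge
removed, clean activation kept) and reverts to `false` otherwise (edge retained). The
final retained set is exactly the last edge: all coordinates before the last are `true`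
and the last coordinate is `false`. -/
theorem stmt_16 (n : ℕ) (hn : 1 ≤ n)
    (AND : (Fin n → Bool) → Bool) (hAND : ∀ x, AND x = decide (∀ j, x j = true))
    (x : ℕ → Fin n → Bool)
    (h0 : x 0 = fun _ => false)
    (hstep : ∀ i : Fin n,
      x (i.val + 1) =
        if AND (Function.update (x i.val) i true) = AND (x i.val)
        then Function.update (x i.val) i true
        else x i.val) :
    (∀ i : Fin n, i.val + 1 < n → x n i = true) ∧
    x n ⟨n - 1, by omega⟩ = false := by
  simp only [hAND] at hstep
  have hprefix : ∀ k, k < n → x k = prefixTrue n k := by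
    intro k
    induction k with
    | zero => intro _; rw [h0, prefixTrue.zero]
    | succ k ih =>
      intro hk
      rw [hstep ⟨k, by omega⟩, ih (by omega), greedy_step_prefixTrue, if_pos hk]
  have hfinal : x n = prefixTrue n (n - 1) := by
    have hlast := hstep ⟨n - 1, by omega⟩
    rw [hprefix (n - 1) (by omega), greedy_step_prefixTrue, if_neg (by omega)] at hlast
    rwa [show n - 1 + 1 = n by omega] at hlast
  refine ⟨fun i hi => ?_, ?_⟩
  · simp [hfinal]
    omega
  · simp [hfinal]
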